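/- Let M be a forest (a possibly infinite acyclic simple graph), ā a finite set of vertices of M, and b a vertex of M. Then b ∈ cl*_M(ā) if and only if b ∈ ā or there is a path in M from b to some element of ā. -/
import Mathlib


open SimpleGraph

/-- The predimension of a finite set `A` of vertices: `|A| - e(A)`, where `e(A)` is the
number of edges of the induced subgraph on `A`. -/
noncomputable def delta {V : Type*} (G : SimpleGraph V) (A : Finset V) : ℤ :=
  (A.card : ℤ) - (Nat.card (G.induce (A : Set V)).edgeSet : ℤ)

/-- `A` is closed in `B` (`A ≤* B`): `A ⊆ B` and `δ(C) > δ(A)` for every finite `C` with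
`A ⊊ C ⊆ B`. -/
def Closed {V : Type*} (G : SimpleGraph V) (A B : Finset V) : Prop :=
  A ⊆ B ∧ ∀ C : Finset V, A ⊂ C → C ⊆ B → delta G A < delta G C

/-- `A` is weakly closed in `B` (`A ≤ B`). -/
def WClosed {V : Type*} (G : SimpleGraph V) (A B : Finset V) : Prop :=
  A ⊆ B ∧ ∀ C : Finset V, A ⊆ C → C ⊆ B → delta G A ≤ delta G C

/-- `A ≤* M` : `A` is closed in every finite superset inside the graph. -/
def ClosedIn {V : Type*} (G : SimpleGraph V) (A : Finset V) : Prop :=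
  ∀ B : Finset V, A ⊆ B → Closed G A B

def WClosedIn {V : Type*} (G : SimpleGraph V) (A : Finset V) : Prop :=
  ∀ B : Finset V, A ⊆ B → WClosed G A B

/-- `(A,B)` is a minimal pair. -/
def MinPair {V : Type*} (G : SimpleGraph V) (A B : Finset V) : Prop :=
  A ⊆ B ∧ (∀ C : Finset V, A ⊆ C → C ⊂ B → Closed G A C) ∧ ¬ Closed G A B

def WMinPair {V : Type*} (G : SimpleGraph V) (A B : Finset V) : Prop :=
  A ⊆ B ∧ (∀ C : Finset V, A ⊆ C → C ⊂ B → WClosed G A C) ∧ ¬ WClosed G A B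

/-- `B` is an intrinsic extension of `A`. -/
def IntrinsicExt {V : Type*} (G : SimpleGraph V) (A B : Finset V) : Prop :=
  A ⊆ B ∧ ∀ C : Finset V, A ⊆ C → C ⊂ B → ¬ Closed G C B

def WIntrinsicExt {V : Type*} (G : SimpleGraph V) (A B : Finset V) : Prop :=
  A ⊆ B ∧ ∀ C : Finset V, A ⊆ C → C ⊂ B → ¬ WClosed G C B

/-- The closure `cl*_M(N)`. -/
def clStar {V : Type*} (G : SimpleGraph V) (N : Set V) : Set V :=
  {b | ∃ A E : Finset V, (A : Set V) ⊆ N ∧ IntrinsicExt G A E ∧ b ∈ E}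

/-- The weak closure `cl_M(N)`. -/
def clWeak {V : Type*} (G : SimpleGraph V) (N : Set V) : Set V :=
  {b | ∃ A E : Finset V, (A : Set V) ⊆ N ∧ WIntrinsicExt G A E ∧ b ∈ E}

open SimpleGraph

open scoped Classical in
noncomputable def eFin {V : Type*} (G : SimpleGraph V) (A : Finset V) : Finset (Sym2 V) :=
  A.sym2.filter (fun e => e ∈ G.edgeSet)

lemma mem_eFin {V : Type*} {G : SimpleGraph V} {A : Finset V} {e : Sym2 V} :
    e ∈ eFin G A ↔ e ∈ A.sym2 ∧ e ∈ G.edgeSet := by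
  simp [eFin]

/-- In an acyclic graph, a nonempty finite vertex set spans fewer edges than vertices. -/
lemma forest_bound {V : Type*} {G : SimpleGraph V} (hG : G.IsAcyclic) (A : Finset V)
    (hA : A.Nonempty) : (eFin G A).card + 1 ≤ A.card := by
  classical
  set r : V → V := fun v => (G.connectedComponentMk v).out with hr
  have hreach : ∀ v, G.Reachable (r v) v := by
    intro v
    exact ConnectedComponent.exact (Quot.out_eq _)
  set d : V → ℕ := fun v => ((hreach v).some.toPath : G.Path (r v) v).1.length with hd
  have dspec : ∀ (v : V) (q : G.Walk (r v) v), q.IsPath → q.length = d v := by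
    intro v q hq
    have := hG.path_unique ⟨q, hq⟩ ((hreach v).some.toPath)
    simp only [hd]
    rw [← Subtype.ext_iff.mp this]
  have hradj : ∀ {x y : V}, G.Adj x y → r x = r y := by
    intro x y h
    simp only [hr]
    rw [ConnectedComponent.sound h.reachable]
  -- case analysis lemma: if z lies on the chosen path to x and adj x z, then d x = d z + 1
  have key1 : ∀ {x z : V}, G.Adj x z →
      z ∈ ((hreach x).some.toPath : G.Path (r x) x).1.support → d x = d z + 1 := by
    intro x z hadj hz
    set p : G.Walk (r x) x := ((hreach x).some.toPath : G.Path (r x) x).1 with hp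
    have hpath : p.IsPath := ((hreach x).some.toPath).2
    have htake : (p.takeUntil z hz).IsPath := hpath.takeUntil hz
    have hdrop : (p.dropUntil z hz).IsPath := hpath.dropUntil hz
    -- the drop part is a path from z to x; the single edge is also a path
    have hsingle : (Walk.cons hadj.symm Walk.nil : G.Walk z x).IsPath := by
      simp [Walk.isPath_def, hadj.ne']
    have heq := hG.path_unique ⟨p.dropUntil z hz, hdrop⟩ ⟨Walk.cons hadj.symm Walk.nil, hsingle⟩
    have hlen : (p.dropUntil z hz).length = 1 := by
      have h' : p.dropUntil z hz = Walk.cons hadj.symm Walk.nil := congrArg Subtype.val heq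
      rw [h']; simp
    have htl : (p.takeUntil z hz).length = d z := by
      have : r x = r z := hradj hadj
      have := dspec z ((p.takeUntil z hz).copy (by rw [this]) rfl) (by simpa using htake)
      simpa using this
    have hsum : (p.takeUntil z hz).length + (p.dropUntil z hz).length = p.length := by
      rw [← Walk.length_append, Walk.take_spec]
    have hpl : p.length = d x := dspec x p hpath
    omega
  -- if d x + 1 = d z and adj x z, then the chosen path for z is (chosen path for x).concat
  have key2 : ∀ {x z : V}, G.Adj x z → d x + 1 = d z →
      ∃ (q : G.Walk (r z) x) (h2 : G.Adj x z),
        q.concat h2 = ((hreach z).some.toPath : G.Path (r z) z).1 := by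
    intro x z hadj hdx
    set p : G.Walk (r x) x := ((hreach x).some.toPath : G.Path (r x) x).1 with hp
    have hpath : p.IsPath := ((hreach x).some.toPath).2
    have hzns : z ∉ p.support := by
      intro hz
      have := key1 hadj hz
      omega
    set q : G.Walk (r z) x := p.copy (by rw [hradj hadj]) rfl with hq
    have hqpath : q.IsPath := by simpa [hq] using hpath
    have hznq : z ∉ q.support := by simpa [hq] using hzns
    have hWpath : (q.concat hadj).IsPath := by
      rw [← Walk.isPath_reverse_iff, Walk.reverse_concat]
      rw [Walk.cons_isPath_iff]
      exact ⟨hqpath.reverse, by simpa using hznq⟩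
    have heq := hG.path_unique ⟨q.concat hadj, hWpath⟩ ((hreach z).some.toPath)
    exact ⟨q, hadj, congrArg Subtype.val heq⟩
  have dichot : ∀ {x z : V}, G.Adj x z → d x + 1 = d z ∨ d z + 1 = d x := by
    intro x z hadj
    set p : G.Walk (r x) x := ((hreach x).some.toPath : G.Path (r x) x).1 with hp
    have hpath : p.IsPath := ((hreach x).some.toPath).2
    by_cases hz : z ∈ p.support
    · right
      have := key1 hadj hz
      omega
    · left
      set q : G.Walk (r z) x := p.copy (by rw [hradj hadj]) rfl with hq
      have hqpath : q.IsPath := by simpa [hq] using hpath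
      have hznq : z ∉ q.support := by simpa [hq] using hz
      have hWpath : (q.concat hadj).IsPath := by
        rw [← Walk.isPath_reverse_iff, Walk.reverse_concat]
        rw [Walk.cons_isPath_iff]
        exact ⟨hqpath.reverse, by simpa using hznq⟩
      have hlen := dspec z (q.concat hadj) hWpath
      have hql : q.length = d x := by
        have := dspec x p hpath
        simpa [hq] using this
      rw [Walk.length_concat] at hlen
      omega
  -- orientation function
  have hex : ∀ e ∈ eFin G A, ∃ z x, G.Adj x z ∧ d x + 1 = d z ∧ e = s(x, z) := by
    intro e he
    rw [mem_eFin] at he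
    induction e with
    | _ x y =>
      have hadj : G.Adj x y := (mem_edgeSet G).mp he.2
      rcases dichot hadj with h | h
      · exact ⟨y, x, hadj, h, rfl⟩
      · exact ⟨x, y, hadj.symm, h, Sym2.eq_swap⟩
  set f : Sym2 V → V := fun e =>
    if h : ∃ z x, G.Adj x z ∧ d x + 1 = d z ∧ e = s(x, z) then h.choose else hA.choose with hf
  have fspec : ∀ e ∈ eFin G A, ∃ x, G.Adj x (f e) ∧ d x + 1 = d (f e) ∧ e = s(x, f e) := by
    intro e he
    have h := hex e he
    simp only [hf, dif_pos h]
    exact h.choose_spec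
  -- injectivity of the source endpoint
  have hdet : ∀ {x₁ x₂ z : V}, G.Adj x₁ z → G.Adj x₂ z → d x₁ + 1 = d z → d x₂ + 1 = d z →
      x₁ = x₂ := by
    intro x₁ x₂ z h1 h2 hd1 hd2
    obtain ⟨q₁, e₁, hq1⟩ := key2 h1 hd1
    obtain ⟨q₂, e₂, hq2⟩ := key2 h2 hd2
    exact (Walk.concat_inj (hq1.trans hq2.symm)).1
  obtain ⟨m, hm, hmin⟩ := A.exists_min_image d hA
  have hmaps : ∀ e ∈ eFin G A, f e ∈ A.erase m := by
    intro e he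
    obtain ⟨x, hadj, hdx, hex⟩ := fspec e he
    have hmem : x ∈ A ∧ f e ∈ A := by
      have := (mem_eFin.mp he).1
      rw [hex, Finset.mk_mem_sym2_iff] at this
      exact this
    refine Finset.mem_erase.mpr ⟨?_, hmem.2⟩
    intro hcon
    have := hmin x hmem.1
    rw [hcon] at hdx
    omega
  have hinj : Set.InjOn f (eFin G A) := by
    intro e₁ he₁ e₂ he₂ hfe
    obtain ⟨x₁, ha1, hd1, hx1⟩ := fspec e₁ he₁
    obtain ⟨x₂, ha2, hd2, hx2⟩ := fspec e₂ he₂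
    rw [hfe] at ha1 hd1 hx1
    have h12 := hdet ha1 ha2 hd1 hd2
    exact hx1.trans (by rw [h12]; exact hx2.symm)
  have hcard : (eFin G A).card ≤ (A.erase m).card :=
    Finset.card_le_card_of_injOn f hmaps hinj
  have := Finset.card_erase_of_mem hm
  have hApos : 1 ≤ A.card := Finset.card_pos.mpr ⟨m, hm⟩
  omega

lemma card_edgeSet_induce {V : Type*} (G : SimpleGraph V) (A : Finset V) :
    Nat.card (G.induce (A : Set V)).edgeSet = (eFin G A).card := by
  classical
  have hinj : Function.Injective (Sym2.map (Subtype.val : ↥(A : Set V) → V)) :=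
    Sym2.map.injective Subtype.val_injective
  have himg : (Sym2.map (Subtype.val : ↥(A : Set V) → V)) '' (G.induce (A : Set V)).edgeSet
      = ↑(eFin G A) := by
    ext e
    constructor
    · rintro ⟨e', he', rfl⟩
      induction e' with
      | _ x y =>
        simp only [mem_edgeSet, comap_adj, Function.Embedding.coe_subtype] at he'
        rw [Sym2.map_pair_eq, Finset.mem_coe, mem_eFin, Finset.mk_mem_sym2_iff, mem_edgeSet]
        exact ⟨⟨x.2, y.2⟩, he'⟩
    · intro he
      rw [Finset.mem_coe, mem_eFin] at he
      obtain ⟨h1, h2⟩ := he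
      induction e with
      | _ x y =>
        rw [Finset.mk_mem_sym2_iff] at h1
        refine ⟨s(⟨x, h1.1⟩, ⟨y, h1.2⟩), ?_, by simp⟩
        simpa [mem_edgeSet] using h2
  calc Nat.card (G.induce (A : Set V)).edgeSet
      = ((G.induce (A : Set V)).edgeSet).ncard := Nat.card_coe_set_eq _
    _ = ((Sym2.map (Subtype.val : ↥(A : Set V) → V)) '' (G.induce (A : Set V)).edgeSet).ncard :=
        (Set.ncard_image_of_injective _ hinj).symm
    _ = (↑(eFin G A) : Set (Sym2 V)).ncard := by rw [himg]
    _ = (eFin G A).card := Set.ncard_coe_finset _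


lemma card_sdiff_add {V : Type*} [DecidableEq V] {C D : Finset V} (h : C ⊆ D) :
    D.card = C.card + (D \ C).card := by
  have := Finset.card_sdiff_add_card_eq_card h
  omega

lemma delta_eq {V : Type*} (G : SimpleGraph V) (A : Finset V) :
    delta G A = (A.card : ℤ) - ((eFin G A).card : ℤ) := by
  rw [delta, card_edgeSet_induce]

lemma delta_pos {V : Type*} {G : SimpleGraph V} (hG : G.IsAcyclic) {A : Finset V}
    (hA : A.Nonempty) : 1 ≤ delta G A := by
  have := forest_bound hG A hA
  rw [delta_eq]
  omega

lemma eFin_mono {V : Type*} (G : SimpleGraph V) {C D : Finset V} (h : C ⊆ D) :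
    eFin G C ⊆ eFin G D := by
  intro e he
  rw [mem_eFin] at he ⊢
  exact ⟨Finset.sym2_mono h he.1, he.2⟩

/-- If no edges cross between `C` and `D \ C`, the edge sets split. -/
lemma delta_split {V : Type*} [DecidableEq V] (G : SimpleGraph V) {C D : Finset V} (hCD : C ⊆ D)
    (hcross : ∀ x ∈ C, ∀ y ∈ D, y ∉ C → ¬ G.Adj x y) :
    delta G D = delta G C + delta G (D \ C) := by
  classical
  have hsub : eFin G D = eFin G C ∪ eFin G (D \ C) := by
    apply Finset.Subset.antisymm
    · intro e he
      rw [mem_eFin] at he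
      obtain ⟨h1, h2⟩ := he
      induction e with
      | _ x y =>
        rw [Finset.mk_mem_sym2_iff] at h1
        have hadj : G.Adj x y := (mem_edgeSet G).mp h2
        rw [Finset.mem_union, mem_eFin, mem_eFin, Finset.mk_mem_sym2_iff,
          Finset.mk_mem_sym2_iff]
        by_cases hx : x ∈ C
        · have hy : y ∈ C := by
            by_contra hy
            exact hcross x hx y h1.2 hy hadj
          exact Or.inl ⟨⟨hx, hy⟩, h2⟩
        · have hy : y ∉ C := by
            intro hy
            exact hcross y hy x h1.1 hx hadj.symm
          exact Or.inr ⟨⟨Finset.mem_sdiff.mpr ⟨h1.1, hx⟩, Finset.mem_sdiff.mpr ⟨h1.2, hy⟩⟩, h2⟩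
    · intro e he
      rcases Finset.mem_union.mp he with h | h
      · exact eFin_mono G hCD h
      · exact eFin_mono G (Finset.sdiff_subset) h
  have hdisj : Disjoint (eFin G C) (eFin G (D \ C)) := by
    rw [Finset.disjoint_left]
    intro e h1 h2
    rw [mem_eFin] at h1 h2
    induction e with
    | _ x y =>
      have hx1 : x ∈ C := (Finset.mk_mem_sym2_iff.mp h1.1).1
      have hx2 : x ∈ D \ C := (Finset.mk_mem_sym2_iff.mp h2.1).1
      exact (Finset.mem_sdiff.mp hx2).2 hx1
  have hcards : (eFin G D).card = (eFin G C).card + (eFin G (D \ C)).card := by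
    rw [hsub, Finset.card_union_of_disjoint hdisj]
  have hv := card_sdiff_add hCD
  rw [delta_eq, delta_eq, delta_eq, hcards, hv]
  push_cast
  ring

/-- The vertex set of a path has predimension at most 1. -/
lemma delta_path_le {V : Type*} [DecidableEq V] (G : SimpleGraph V) {u v : V} (p : G.Walk u v)
    (hp : p.IsPath) : delta G p.support.toFinset ≤ 1 := by
  classical
  have hcardV : p.support.toFinset.card = p.length + 1 := by
    rw [List.toFinset_card_of_nodup hp.support_nodup, Walk.length_support]
  have hedges : p.edges.toFinset ⊆ eFin G p.support.toFinset := by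
    intro e he
    rw [List.mem_toFinset] at he
    rw [mem_eFin]
    constructor
    · induction e with
      | _ x y =>
        rw [Finset.mk_mem_sym2_iff, List.mem_toFinset, List.mem_toFinset]
        exact ⟨p.fst_mem_support_of_mem_edges he, p.snd_mem_support_of_mem_edges he⟩
    · exact p.edges_subset_edgeSet he
  have hcardE : p.length ≤ (eFin G p.support.toFinset).card := by
    have h1 : p.edges.toFinset.card = p.length := by
      rw [List.toFinset_card_of_nodup hp.isTrail.edges_nodup, Walk.length_edges]
    rw [← h1]
    exact Finset.card_le_card hedges
  rw [delta_eq, hcardV]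
  push_cast
  omega

/-- Let `M` be a (possibly infinite) forest, `ā` a finite set of vertices
and `b` a vertex. Then `b ∈ cl*_M(ā)` iff `b ∈ ā` or there is a path in `M` from `b`
to some element of `ā`. -/
theorem stmt_8 {V : Type*} (G : SimpleGraph V) (hG : G.IsAcyclic) (A : Finset V) (b : V) :
    b ∈ clStar G (A : Set V) ↔ b ∈ A ∨ ∃ a ∈ A, ∃ p : G.Walk b a, p.IsPath := by
  classical
  constructor
  · rintro ⟨A₀, E, hA₀, ⟨hAE, hIE⟩, hbE⟩
    by_contra hcon
    push_neg at hcon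
    obtain ⟨hbA, hnopath⟩ := hcon
    set C : Finset V := E.filter (fun x => ∃ a ∈ A₀, G.Reachable x a) with hC
    have hA₀C : A₀ ⊆ C := by
      intro a ha
      rw [hC, Finset.mem_filter]
      exact ⟨hAE ha, a, ha, Reachable.refl a⟩
    have hCE : C ⊆ E := Finset.filter_subset _ _
    have hbC : b ∉ C := by
      rw [hC, Finset.mem_filter]
      rintro ⟨-, a, haA₀, hr⟩
      exact hnopath a (hA₀ haA₀) hr.some.toPath.1 hr.some.toPath.2
    have hCssE : C ⊂ E := Finset.ssubset_iff_of_subset hCE |>.mpr ⟨b, hbE, hbC⟩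
    apply hIE C hA₀C hCssE
    refine ⟨hCE, ?_⟩
    intro D hCD hDE
    have hcross : ∀ x ∈ C, ∀ y ∈ D, y ∉ C → ¬ G.Adj x y := by
      intro x hx y hyD hyC hadj
      apply hyC
      rw [hC, Finset.mem_filter] at hx ⊢
      obtain ⟨-, a, haA₀, hr⟩ := hx
      exact ⟨hDE hyD, a, haA₀, (hadj.symm.reachable).trans hr⟩
    have hsplit := delta_split G hCD.subset hcross
    have hne : (D \ C).Nonempty := by
      obtain ⟨x, hxD, hxC⟩ := Finset.exists_of_ssubset hCD
      exact ⟨x, Finset.mem_sdiff.mpr ⟨hxD, hxC⟩⟩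
    have := delta_pos hG hne
    omega
  · rintro (hbA | ⟨a, haA, p, hp⟩)
    · refine ⟨{b}, {b}, by simpa using hbA, ⟨Finset.Subset.refl _, ?_⟩, Finset.mem_singleton_self b⟩
      intro C hC hlt
      exact absurd hC hlt.2
    · refine ⟨{a}, p.support.toFinset, by simpa using haA, ⟨?_, ?_⟩, ?_⟩
      · intro x hx
        rw [Finset.mem_singleton] at hx
        subst hx
        rw [List.mem_toFinset]
        exact p.end_mem_support
      · intro C haC hCss hclosed
        have hlt := hclosed.2 p.support.toFinset hCss (Finset.Subset.refl _)
        have h1 := delta_path_le G p hp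
        have h2 : 1 ≤ delta G C := by
          apply delta_pos hG
          exact ⟨a, haC (Finset.mem_singleton_self a)⟩
        omega
      · rw [List.mem_toFinset]
        exact p.start_mem_support
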